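/- arXiv:math/0610646 — 4 statements merged into one kernel-verified Lean document; each statement's English description precedes it below -/
import Mathlib

section
/- Let H₁ and H₂ be Hilbert spaces, H = H₁ ⊕ H₂, and let F : H → H be a bounded self-adjoint operator with block-matrix representation F = [[A, B*], [B, C]] where C : H₂ → H₂ is uniformly positive (i.e., C ≥ ε·I for some ε > 0). Then the negative index of inertia of F equals that of the Schur complement: ind F = ind (A − B* C⁻¹ B). -/
/-!
Completing the square gives
`⟪F (x, y), (x, y)⟫ = ⟪S x, x⟫ + ⟪C (y + C⁻¹ B x), y + C⁻¹ B x⟫` with `S = A - B* C⁻¹ B`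
and `C ≥ 0`. Hence the quadratic form of `S` is dominated by that of `F` through the projection
`(x, y) ↦ x`, and that of `F` by that of `S` through the graph map `x ↦ (x, -C⁻¹ B x)`. The
negative index can only grow along such a domination by a bounded map: the map is injective on
any subspace where the dominating form is uniformly negative, and boundedness keeps the image
uniformly negative.
-/

open MeasureTheory ContinuousLinearMap
open scoped RealInnerProductSpace

/-- The negative index of inertia of a bounded operator on a real inner product
space: the supremum of dimensions of finite-dimensional subspaces on which the
quadratic form of `F` is uniformly negative. -/
noncomputable def negInd {H : Type*} [NormedAddCommGroup H] [InnerProductSpace ℝ H]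
    (F : H →L[ℝ] H) : ℕ∞ :=
  ⨆ (M : Submodule ℝ H) (_ : FiniteDimensional ℝ M)
    (_ : ∃ ε > 0, ∀ x ∈ M, ⟪F x, x⟫ ≤ -ε * ‖x‖ ^ 2), (Module.finrank ℝ M : ℕ∞)

section NegInd

variable {E E' : Type*} [NormedAddCommGroup E] [InnerProductSpace ℝ E]
  [NormedAddCommGroup E'] [InnerProductSpace ℝ E']

theorem finrank_le_negInd {F : E →L[ℝ] E} (M : Submodule ℝ E) [FiniteDimensional ℝ M] {ε : ℝ}
    (hε : 0 < ε) (hM : ∀ x ∈ M, ⟪F x, x⟫ ≤ -ε * ‖x‖ ^ 2) :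
    (Module.finrank ℝ M : ℕ∞) ≤ negInd F :=
  le_iSup_of_le M <| le_iSup_of_le ‹_› <| le_iSup_of_le ⟨ε, hε, hM⟩ le_rfl

theorem negInd_le_of_inner_map_le {F : E →L[ℝ] E} {G : E' →L[ℝ] E'} (T : E →L[ℝ] E')
    (hT : ∀ x, ⟪G (T x), T x⟫ ≤ ⟪F x, x⟫) : negInd F ≤ negInd G := by
  refine iSup_le fun M => iSup_le fun _ => iSup_le fun ⟨ε, hε, hM⟩ => ?_
  have hinj : Function.Injective ((T : E →ₗ[ℝ] E').domRestrict M) := by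
    refine (injective_iff_map_eq_zero _).2 fun x (hx : T x = 0) => ?_
    have hquad : ⟪G (T x), T x⟫ ≤ -ε * ‖(x : E)‖ ^ 2 := (hT x).trans (hM x x.2)
    rw [hx, map_zero, inner_zero_left] at hquad
    have hnorm : ‖(x : E)‖ ^ 2 ≤ 0 := by nlinarith [sq_nonneg ‖(x : E)‖]
    simpa using hnorm
  have hK : 0 < 1 + ‖T‖ ^ 2 := by positivity
  have hneg : ∀ y ∈ M.map (T : E →ₗ[ℝ] E'), ⟪G y, y⟫ ≤ -(ε / (1 + ‖T‖ ^ 2)) * ‖y‖ ^ 2 := by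
    rintro _ ⟨x, hx, rfl⟩
    have hTx : ‖T x‖ ^ 2 ≤ (1 + ‖T‖ ^ 2) * ‖x‖ ^ 2 := by
      nlinarith [T.le_opNorm x, norm_nonneg (T x), sq_nonneg ‖x‖]
    calc ⟪G (T x), T x⟫ ≤ -ε * ‖x‖ ^ 2 := (hT x).trans (hM x hx)
      _ ≤ -(ε / (1 + ‖T‖ ^ 2)) * ‖T x‖ ^ 2 := by
        rw [neg_mul, neg_mul, neg_le_neg_iff, div_mul_eq_mul_div, div_le_iff₀ hK]
        nlinarith
  rw [← LinearMap.range_domRestrict] at hneg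
  calc (Module.finrank ℝ M : ℕ∞)
        = Module.finrank ℝ (LinearMap.range ((T : E →ₗ[ℝ] E').domRestrict M)) := by
          rw [LinearMap.finrank_range_of_inj hinj]
    _ ≤ negInd G := finrank_le_negInd _ (div_pos hε hK) hneg

end NegInd

section Schur

variable {H₁ H₂ : Type*} [NormedAddCommGroup H₁] [InnerProductSpace ℝ H₁] [CompleteSpace H₁]
  [NormedAddCommGroup H₂] [InnerProductSpace ℝ H₂] [CompleteSpace H₂]
  {F : WithLp 2 (H₁ × H₂) →L[ℝ] WithLp 2 (H₁ × H₂)} {A : H₁ →L[ℝ] H₁} {B : H₁ →L[ℝ] H₂}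
  {C Cinv : H₂ →L[ℝ] H₂}

theorem isSymmetric_of_block (hFsym : ∀ u v, ⟪F u, v⟫ = ⟪u, F v⟫)
    (hblock : ∀ x y, F ((WithLp.equiv 2 (H₁ × H₂)).symm (x, y)) =
      (WithLp.equiv 2 (H₁ × H₂)).symm (A x + adjoint B y, B x + C y)) :
    (C : H₂ →ₗ[ℝ] H₂).IsSymmetric := by
  intro y y'
  simp only [WithLp.equiv_symm_apply] at hblock
  simpa [hblock] using hFsym (WithLp.toLp 2 (0, y)) (WithLp.toLp 2 (0, y'))

theorem inner_block_eq_inner_schur_add (hCsym : (C : H₂ →ₗ[ℝ] H₂).IsSymmetric)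
    (hblock : ∀ x y, F ((WithLp.equiv 2 (H₁ × H₂)).symm (x, y)) =
      (WithLp.equiv 2 (H₁ × H₂)).symm (A x + adjoint B y, B x + C y))
    (hCinv : C.comp Cinv = 1) (u : WithLp 2 (H₁ × H₂)) :
    ⟪F u, u⟫ = ⟪(A - (adjoint B).comp (Cinv.comp B)) u.fst, u.fst⟫
      + ⟪C (u.snd + Cinv (B u.fst)), u.snd + Cinv (B u.fst)⟫ := by
  simp only [WithLp.equiv_symm_apply] at hblock
  have hCCinv (z : H₂) : C (Cinv z) = z := by simpa using DFunLike.congr_fun hCinv z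
  have hcross : ⟪C u.snd, Cinv (B u.fst)⟫ = ⟪u.snd, B u.fst⟫ :=
    (hCsym _ _).trans (by rw [coe_coe, hCCinv])
  rw [show F u = _ from hblock u.fst u.snd]
  simp only [WithLp.prod_inner_apply, WithLp.ofLp_fst, WithLp.ofLp_snd, sub_apply, coe_comp,
    Function.comp_apply, map_add, inner_add_left, inner_add_right, inner_sub_left,
    adjoint_inner_left, hCCinv, hcross]
  rw [real_inner_comm (B u.fst) u.snd, real_inner_comm (B u.fst) (Cinv (B u.fst))]
  ring

end Schur

theorem stmt0_general {H₁ H₂ : Type*} [NormedAddCommGroup H₁] [InnerProductSpace ℝ H₁] [CompleteSpace H₁]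
    [NormedAddCommGroup H₂] [InnerProductSpace ℝ H₂] [CompleteSpace H₂]
    (F : WithLp 2 (H₁ × H₂) →L[ℝ] WithLp 2 (H₁ × H₂))
    (hFsym : ∀ u v, ⟪F u, v⟫ = ⟪u, F v⟫)
    (A : H₁ →L[ℝ] H₁) (B : H₁ →L[ℝ] H₂) (C Cinv : H₂ →L[ℝ] H₂)
    (hblock : ∀ x y, F ((WithLp.equiv 2 (H₁ × H₂)).symm (x, y)) =
      (WithLp.equiv 2 (H₁ × H₂)).symm (A x + adjoint B y, B x + C y))
    (hpos : ∃ ε > 0, ∀ y : H₂, ε * ‖y‖ ^ 2 ≤ ⟪C y, y⟫)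
    (hCinv2 : C.comp Cinv = 1) :
    negInd F = negInd (A - (adjoint B).comp (Cinv.comp B)) := by
  obtain ⟨ε, hε, hC⟩ := hpos
  have hCnonneg (z : H₂) : 0 ≤ ⟪C z, z⟫ := (mul_nonneg hε.le (sq_nonneg ‖z‖)).trans (hC z)
  have hq := inner_block_eq_inner_schur_add (isSymmetric_of_block hFsym hblock) hblock hCinv2
  apply le_antisymm
  · refine negInd_le_of_inner_map_le (WithLp.fstL 2 ℝ H₁ H₂) fun u => ?_
    rw [hq u, WithLp.fstL_apply]
    exact le_add_of_nonneg_right (hCnonneg _)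
  · refine negInd_le_of_inner_map_le
      ((WithLp.prodContinuousLinearEquiv 2 ℝ H₁ H₂).symm.toContinuousLinearMap ∘L
        (ContinuousLinearMap.id ℝ H₁).prod (-(Cinv ∘L B))) fun x => ?_
    simp [hq]

/-- If `F = [[A, B*], [B, C]]` is a bounded self-adjoint block operator on
`H = H₁ ⊕ H₂` with `C` uniformly positive (and `Cinv` its bounded inverse), then
`ind F = ind (A - B* C⁻¹ B)`. -/
theorem stmt0 {H₁ H₂ : Type*} [NormedAddCommGroup H₁] [InnerProductSpace ℝ H₁] [CompleteSpace H₁]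
    [NormedAddCommGroup H₂] [InnerProductSpace ℝ H₂] [CompleteSpace H₂]
    (F : WithLp 2 (H₁ × H₂) →L[ℝ] WithLp 2 (H₁ × H₂))
    (hFsym : ∀ u v, ⟪F u, v⟫ = ⟪u, F v⟫)
    (A : H₁ →L[ℝ] H₁) (B : H₁ →L[ℝ] H₂) (C Cinv : H₂ →L[ℝ] H₂)
    (hblock : ∀ x y, F ((WithLp.equiv 2 (H₁ × H₂)).symm (x, y)) =
      (WithLp.equiv 2 (H₁ × H₂)).symm (A x + adjoint B y, B x + C y))
    (hpos : ∃ ε > 0, ∀ y : H₂, ε * ‖y‖ ^ 2 ≤ ⟪C y, y⟫)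
    (hCinv1 : Cinv.comp C = 1) (hCinv2 : C.comp Cinv = 1) :
    negInd F = negInd (A - (adjoint B).comp (Cinv.comp B)) :=
  stmt0_general F hFsym A B C Cinv hblock hpos hCinv2
end

section
/- For any two functions y, z in the Sobolev space W̊¹₂[0,1] (functions vanishing at 0 and 1 with derivative in L²), the L² norm of the derivative of the product satisfies ‖(ȳz)′‖_{L²[0,1]} ≤ ‖y′‖_{L²[0,1]} · ‖z′‖_{L²[0,1]}. -/
/-!
Since `y(x) = ∫₀ˣ y' = -∫ₓ¹ y'`, we get `2|y(x)| ≤ ∫₀¹ |y'| ≤ ‖y'‖₂`, i.e. `y(x)² ≤ ‖y'‖₂² / 4`,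
and likewise for `z`. Then pointwise
`(y'z + yz')² ≤ 2y'²z² + 2y²z'² ≤ ‖z'‖₂² y'² / 2 + ‖y'‖₂² z'² / 2`,
and integrating gives `‖(yz)'‖₂² ≤ ‖y'‖₂² ‖z'‖₂²`.
-/

open MeasureTheory Set

namespace intervalIntegral

theorem integral_mono_on_of_nonneg {μ : Measure ℝ} {f g : ℝ → ℝ} {a b : ℝ} (hab : a ≤ b)
    (hg : IntervalIntegrable g μ a b) (hf : ∀ x ∈ Icc a b, 0 ≤ f x)
    (h : ∀ x ∈ Icc a b, f x ≤ g x) :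
    ∫ x in a..b, f x ∂μ ≤ ∫ x in a..b, g x ∂μ := by
  rw [integral_of_le hab, integral_of_le hab]
  refine integral_mono_of_nonneg ?_ hg.1 ?_ <;>
    filter_upwards [ae_restrict_mem measurableSet_Ioc] with x hx
  exacts [hf x (Ioc_subset_Icc_self hx), h x (Ioc_subset_Icc_self hx)]

/-- The quadratic `s ↦ ∫ (f - s)²` is nonnegative, so its discriminant is `≤ 0`. -/
theorem sq_integral_le_mul_integral_sq {f : ℝ → ℝ} {a b : ℝ} (hab : a ≤ b)
    (hf : IntervalIntegrable f volume a b)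
    (hf2 : IntervalIntegrable (fun t => f t ^ 2) volume a b) :
    (∫ t in a..b, f t) ^ 2 ≤ (b - a) * ∫ t in a..b, f t ^ 2 := by
  have hquad : ∀ s : ℝ,
      0 ≤ (b - a) * (s * s) + (-2 * ∫ t in a..b, f t) * s + ∫ t in a..b, f t ^ 2 := by
    intro s
    have hexpand : ∫ t in a..b, (f t - s) ^ 2
        = (b - a) * (s * s) + (-2 * ∫ t in a..b, f t) * s + ∫ t in a..b, f t ^ 2 := by
      have hsq : (fun t => (f t - s) ^ 2) = fun t => f t ^ 2 - 2 * s * f t + s ^ 2 :=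
        funext fun t => by ring
      rw [hsq, integral_add (hf2.sub (hf.const_mul _)) intervalIntegrable_const,
        integral_sub hf2 (hf.const_mul _), integral_const_mul, integral_const, smul_eq_mul]
      ring
    rw [← hexpand]
    exact integral_nonneg hab fun _ _ => sq_nonneg _
  have := discrim_le_zero hquad
  rw [discrim] at this
  linarith

theorem two_mul_abs_integral_le_integral_abs {f : ℝ → ℝ} {a b x : ℝ}
    (hf : IntervalIntegrable f volume a b) (hx : x ∈ Icc a b) (h0 : ∫ t in a..b, f t = 0) :
    2 * |∫ t in a..x, f t| ≤ ∫ t in a..b, |f t| := by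
  have hax : IntervalIntegrable f volume a x :=
    hf.mono_set (uIcc_subset_uIcc left_mem_uIcc (mem_uIcc_of_le hx.1 hx.2))
  have hxb : IntervalIntegrable f volume x b :=
    hf.mono_set (uIcc_subset_uIcc (mem_uIcc_of_le hx.1 hx.2) right_mem_uIcc)
  have hsplit := integral_add_adjacent_intervals hax hxb
  have hsplit_abs := integral_add_adjacent_intervals hax.abs hxb.abs
  have hleft := abs_integral_le_integral_abs (f := f) (μ := volume) hx.1
  have hright := abs_integral_le_integral_abs (f := f) (μ := volume) hx.2
  have hneg : ∫ t in a..x, f t = -∫ t in x..b, f t := by linarith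
  rw [hneg, abs_neg] at hleft ⊢
  linarith

end intervalIntegral

open intervalIntegral in
theorem four_mul_sq_le_of_eq_integral {y y' : ℝ → ℝ} {a b x : ℝ}
    (hrep : ∀ x ∈ Icc a b, y x = ∫ t in a..x, y' t) (hb : y b = 0)
    (hy' : IntervalIntegrable y' volume a b)
    (hy'2 : IntervalIntegrable (fun t => y' t ^ 2) volume a b) (hx : x ∈ Icc a b) :
    4 * y x ^ 2 ≤ (b - a) * ∫ t in a..b, y' t ^ 2 := by
  have hab : a ≤ b := hx.1.trans hx.2
  have h0 : ∫ t in a..b, y' t = 0 := by rw [← hrep b ⟨hab, le_rfl⟩, hb]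
  have habs2 : IntervalIntegrable (fun t => |y' t| ^ 2) volume a b := by simpa only [sq_abs]
  calc 4 * y x ^ 2 = (2 * |y x|) ^ 2 := by rw [mul_pow, sq_abs]; norm_num
    _ ≤ (∫ t in a..b, |y' t|) ^ 2 := by
        rw [hrep x hx]
        exact pow_le_pow_left₀ (by positivity) (two_mul_abs_integral_le_integral_abs hy' hx h0) 2
    _ ≤ (b - a) * ∫ t in a..b, y' t ^ 2 := by
        simpa only [sq_abs] using sq_integral_le_mul_integral_sq hab hy'.abs habs2

/-- For `y, z` in the Sobolev space `W̊¹₂[0,1]` (absolutely continuous with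
square-integrable derivative, vanishing at both endpoints), the `L²` norm of the
derivative of the product satisfies `‖(y z)′‖ ≤ ‖y′‖ ⬝ ‖z′‖`. -/
theorem stmt3 (y z y' z' : ℝ → ℝ)
    (hyrep : ∀ x ∈ Set.Icc (0:ℝ) 1, y x = ∫ t in (0:ℝ)..x, y' t)
    (hzrep : ∀ x ∈ Set.Icc (0:ℝ) 1, z x = ∫ t in (0:ℝ)..x, z' t)
    (hy1 : y 1 = 0) (hz1 : z 1 = 0)
    (hy'int : IntervalIntegrable y' volume 0 1)
    (hz'int : IntervalIntegrable z' volume 0 1)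
    (hy'sq : IntervalIntegrable (fun t => y' t ^ 2) volume 0 1)
    (hz'sq : IntervalIntegrable (fun t => z' t ^ 2) volume 0 1) :
    Real.sqrt (∫ t in (0:ℝ)..1, (y' t * z t + y t * z' t) ^ 2)
      ≤ Real.sqrt (∫ t in (0:ℝ)..1, y' t ^ 2) * Real.sqrt (∫ t in (0:ℝ)..1, z' t ^ 2) := by
  set Y := ∫ t in (0:ℝ)..1, y' t ^ 2
  set Z := ∫ t in (0:ℝ)..1, z' t ^ 2
  have hy : ∀ x ∈ Icc (0:ℝ) 1, 4 * y x ^ 2 ≤ Y := fun x hx => by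
    simpa using four_mul_sq_le_of_eq_integral hyrep hy1 hy'int hy'sq hx
  have hz : ∀ x ∈ Icc (0:ℝ) 1, 4 * z x ^ 2 ≤ Z := fun x hx => by
    simpa using four_mul_sq_le_of_eq_integral hzrep hz1 hz'int hz'sq hx
  have hpointwise : ∀ t ∈ Icc (0:ℝ) 1,
      (y' t * z t + y t * z' t) ^ 2 ≤ Z / 2 * y' t ^ 2 + Y / 2 * z' t ^ 2 := fun t ht => by
    nlinarith [sq_nonneg (y' t * z t - y t * z' t),
      mul_le_mul_of_nonneg_left (hz t ht) (sq_nonneg (y' t)),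
      mul_le_mul_of_nonneg_left (hy t ht) (sq_nonneg (z' t))]
  have hintegral : ∫ t in (0:ℝ)..1, (y' t * z t + y t * z' t) ^ 2 ≤ Y * Z := calc
    _ ≤ ∫ t in (0:ℝ)..1, (Z / 2 * y' t ^ 2 + Y / 2 * z' t ^ 2) :=
        intervalIntegral.integral_mono_on_of_nonneg zero_le_one
          ((hy'sq.const_mul _).add (hz'sq.const_mul _)) (fun _ _ => sq_nonneg _) hpointwise
    _ = Y * Z := by
        rw [intervalIntegral.integral_add (hy'sq.const_mul _) (hz'sq.const_mul _),
          intervalIntegral.integral_const_mul, intervalIntegral.integral_const_mul]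
        ring
  calc _ ≤ Real.sqrt (Y * Z) := Real.sqrt_le_sqrt hintegral
    _ = Real.sqrt Y * Real.sqrt Z :=
        Real.sqrt_mul (intervalIntegral.integral_nonneg zero_le_one fun _ _ => sq_nonneg _) Z
end

section
/- Let F = [[A, B*], [B, C]] be a bounded self-adjoint block operator on H = H₁ ⊕ H₂ with H₁ finite-dimensional, and suppose ε ≥ 2‖B‖² and ‖C − I‖ < 1/2. Then ind A ≤ ind F ≤ ind (A − ε·I). -/
open MeasureTheory ContinuousLinearMap
open scoped RealInnerProductSpace

/-!
Both inequalities compare quadratic forms along a linear map `f` that does not increase norms: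
if `⟪G (f u), f u⟫ ≤ ⟪F u, u⟫`, then `f` maps every subspace on which the form of `F` is
uniformly negative injectively onto one on which the form of `G` is. For `ind A ≤ ind F` take
the inclusion of `H₁`. For `ind F ≤ ind (A - ε)` take the projection onto `H₁`: Cauchy–Schwarz
and AM–GM give `2⟪B x, y⟫ ≥ -2‖B‖²‖x‖² - ‖y‖²/2`, while `‖C - 1‖ ≤ 1/2` gives
`⟪C y, y⟫ ≥ ‖y‖²/2`, so `⟪F (x, y), (x, y)⟫ ≥ ⟪A x, x⟫ - ε‖x‖²`. This replaces the Schur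
complement estimate `B* C⁻¹ B ≤ 2‖B‖²`.
-/

section

variable {E E' : Type*} [NormedAddCommGroup E] [InnerProductSpace ℝ E]
  [NormedAddCommGroup E'] [InnerProductSpace ℝ E']

theorem negInd_le_of_inner_map_le_s12 {F : E →L[ℝ] E} {G : E' →L[ℝ] E'} (f : E →ₗ[ℝ] E')
    (hf : ∀ u, ‖f u‖ ≤ ‖u‖) (hFG : ∀ u, ⟪G (f u), f u⟫ ≤ ⟪F u, u⟫) :
    negInd F ≤ negInd G := by
  refine iSup_le fun M => iSup_le fun _ => iSup_le fun ⟨δ, hδ, hneg⟩ => ?_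
  have hbound : ∀ u ∈ M, ⟪G (f u), f u⟫ ≤ -δ * ‖f u‖ ^ 2 := fun u hu =>
    calc ⟪G (f u), f u⟫ ≤ -δ * ‖u‖ ^ 2 := (hFG u).trans (hneg u hu)
      _ ≤ -δ * ‖f u‖ ^ 2 :=
        mul_le_mul_of_nonpos_left (pow_le_pow_left₀ (norm_nonneg _) (hf u) 2) (by linarith)
  have hinj : Function.Injective (f.domRestrict M) := by
    refine (injective_iff_map_eq_zero _).2 fun ⟨u, hu⟩ hfu => ?_
    have hfu : f u = 0 := hfu
    have hnonneg := (hFG u).trans (hneg u hu)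
    simp only [hfu, map_zero, inner_zero_left] at hnonneg
    have hu0 : ‖u‖ ^ 2 ≤ 0 := by nlinarith
    simpa using hu0
  have hnegG : ∃ δ > 0, ∀ x ∈ M.map f, ⟪G x, x⟫ ≤ -δ * ‖x‖ ^ 2 :=
    ⟨δ, hδ, by rintro _ ⟨u, hu, rfl⟩; exact hbound u hu⟩
  calc (Module.finrank ℝ M : ℕ∞) = Module.finrank ℝ (M.map f) := by
        rw [← LinearMap.range_domRestrict, LinearMap.finrank_range_of_inj hinj]
    _ ≤ negInd G := le_iSup_of_le (M.map f) <| le_iSup_of_le inferInstance <|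
        le_iSup_of_le hnegG le_rfl

theorem one_sub_norm_sub_one_mul_sq_le_inner (C : E →L[ℝ] E) (y : E) :
    (1 - ‖C - 1‖) * ‖y‖ ^ 2 ≤ ⟪C y, y⟫ := by
  have hsplit : ⟪C y, y⟫ = ‖y‖ ^ 2 + ⟪(C - 1) y, y⟫ := by
    rw [sub_apply, one_apply_eq_self, inner_sub_left, real_inner_self_eq_norm_sq]
    ring
  have : -⟪(C - 1) y, y⟫ ≤ ‖C - 1‖ * ‖y‖ ^ 2 :=
    calc -⟪(C - 1) y, y⟫ ≤ ‖(C - 1) y‖ * ‖y‖ := (neg_le_abs _).trans (abs_real_inner_le_norm _ _)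
      _ ≤ ‖C - 1‖ * ‖y‖ * ‖y‖ := by gcongr; exact le_opNorm _ _
      _ = ‖C - 1‖ * ‖y‖ ^ 2 := by ring
  linarith

theorem neg_le_two_mul_inner_apply (B : E →L[ℝ] E') (x : E) (y : E') :
    -(2 * ‖B‖ ^ 2 * ‖x‖ ^ 2 + ‖y‖ ^ 2 / 2) ≤ 2 * ⟪B x, y⟫ := by
  have hCS : -⟪B x, y⟫ ≤ ‖B‖ * ‖x‖ * ‖y‖ :=
    calc -⟪B x, y⟫ ≤ ‖B x‖ * ‖y‖ := (neg_le_abs _).trans (abs_real_inner_le_norm _ _)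
      _ ≤ ‖B‖ * ‖x‖ * ‖y‖ := by gcongr; exact le_opNorm _ _
  nlinarith [sq_nonneg (2 * ‖B‖ * ‖x‖ - ‖y‖)]

end

section

variable {H₁ H₂ : Type*} [NormedAddCommGroup H₁] [InnerProductSpace ℝ H₁] [CompleteSpace H₁]
  [NormedAddCommGroup H₂] [InnerProductSpace ℝ H₂] [CompleteSpace H₂]
  {F : WithLp 2 (H₁ × H₂) →L[ℝ] WithLp 2 (H₁ × H₂)}
  {A : H₁ →L[ℝ] H₁} {B : H₁ →L[ℝ] H₂} {C : H₂ →L[ℝ] H₂}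

theorem inner_apply_self_of_block (hblock : ∀ x y, F ((WithLp.equiv 2 (H₁ × H₂)).symm (x, y)) =
      (WithLp.equiv 2 (H₁ × H₂)).symm (A x + adjoint B y, B x + C y))
    (u : WithLp 2 (H₁ × H₂)) :
    ⟪F u, u⟫ = ⟪A u.fst, u.fst⟫ + 2 * ⟪B u.fst, u.snd⟫ + ⟪C u.snd, u.snd⟫ := by
  have hFu : F u = WithLp.toLp 2 (A u.fst + adjoint B u.snd, B u.fst + C u.snd) := hblock _ _
  simp only [hFu, WithLp.prod_inner_apply, WithLp.ofLp_fst, WithLp.ofLp_snd, inner_add_left,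
    adjoint_inner_left]
  rw [real_inner_comm u.snd]
  ring

theorem inner_sub_smul_one_fst_le_inner_of_block
    (hblock : ∀ x y, F ((WithLp.equiv 2 (H₁ × H₂)).symm (x, y)) =
      (WithLp.equiv 2 (H₁ × H₂)).symm (A x + adjoint B y, B x + C y))
    {ε : ℝ} (hε : 2 * ‖B‖ ^ 2 ≤ ε) (hC : ‖C - 1‖ ≤ 1 / 2) (u : WithLp 2 (H₁ × H₂)) :
    ⟪(A - ε • (1 : H₁ →L[ℝ] H₁)) u.fst, u.fst⟫ ≤ ⟪F u, u⟫ := by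
  have hshift : ⟪(A - ε • (1 : H₁ →L[ℝ] H₁)) u.fst, u.fst⟫ =
      ⟪A u.fst, u.fst⟫ - ε * ‖u.fst‖ ^ 2 := by
    rw [sub_apply, smul_apply, one_apply_eq_self, inner_sub_left, real_inner_smul_left,
      real_inner_self_eq_norm_sq]
  have hB := neg_le_two_mul_inner_apply B u.fst u.snd
  have hCy := one_sub_norm_sub_one_mul_sq_le_inner C u.snd
  rw [hshift, inner_apply_self_of_block hblock]
  nlinarith [sq_nonneg ‖u.fst‖, sq_nonneg ‖u.snd‖]

end

theorem stmt12_general {H₁ H₂ : Type*} [NormedAddCommGroup H₁] [InnerProductSpace ℝ H₁]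
    [FiniteDimensional ℝ H₁]
    [NormedAddCommGroup H₂] [InnerProductSpace ℝ H₂] [CompleteSpace H₂]
    (F : WithLp 2 (H₁ × H₂) →L[ℝ] WithLp 2 (H₁ × H₂))
    (A : H₁ →L[ℝ] H₁) (B : H₁ →L[ℝ] H₂) (C : H₂ →L[ℝ] H₂)
    (hblock : ∀ x y, F ((WithLp.equiv 2 (H₁ × H₂)).symm (x, y)) =
      (WithLp.equiv 2 (H₁ × H₂)).symm (A x + adjoint B y, B x + C y))
    (ε : ℝ) (hε : 2 * ‖B‖ ^ 2 ≤ ε) (hC : ‖C - 1‖ < 1 / 2) :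
    negInd A ≤ negInd F ∧ negInd F ≤ negInd (A - ε • (1 : H₁ →L[ℝ] H₁)) := by
  constructor
  · refine negInd_le_of_inner_map_le_s12
      ((WithLp.linearEquiv 2 ℝ (H₁ × H₂)).symm.toLinearMap ∘ₗ LinearMap.inl ℝ H₁ H₂)
      (fun x => (WithLp.norm_toLp_fst 2 H₁ H₂ x).le) fun x => ?_
    simp [inner_apply_self_of_block hblock]
  · exact negInd_le_of_inner_map_le_s12 (WithLp.fstₗ 2 ℝ H₁ H₂) (WithLp.norm_fst_le H₁)
      (inner_sub_smul_one_fst_le_inner_of_block hblock hε hC.le)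

/-- For a bounded self-adjoint block operator `F = [[A, B*], [B, C]]` on
`H = H₁ ⊕ H₂` with `H₁` finite-dimensional, if `ε ≥ 2‖B‖²` and `‖C − I‖ < 1/2`,
then `ind A ≤ ind F ≤ ind (A − ε·I)`. -/
theorem stmt12 {H₁ H₂ : Type*} [NormedAddCommGroup H₁] [InnerProductSpace ℝ H₁]
    [FiniteDimensional ℝ H₁]
    [NormedAddCommGroup H₂] [InnerProductSpace ℝ H₂] [CompleteSpace H₂]
    (F : WithLp 2 (H₁ × H₂) →L[ℝ] WithLp 2 (H₁ × H₂))
    (hFsym : ∀ u v, ⟪F u, v⟫ = ⟪u, F v⟫)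
    (A : H₁ →L[ℝ] H₁) (B : H₁ →L[ℝ] H₂) (C : H₂ →L[ℝ] H₂)
    (hAsym : ∀ u v, ⟪A u, v⟫ = ⟪u, A v⟫) (hCsym : ∀ u v, ⟪C u, v⟫ = ⟪u, C v⟫)
    (hblock : ∀ x y, F ((WithLp.equiv 2 (H₁ × H₂)).symm (x, y)) =
      (WithLp.equiv 2 (H₁ × H₂)).symm (A x + adjoint B y, B x + C y))
    (ε : ℝ) (hε : 2 * ‖B‖ ^ 2 ≤ ε) (hC : ‖C - 1‖ < 1 / 2) :
    negInd A ≤ negInd F ∧ negInd F ≤ negInd (A - ε • (1 : H₁ →L[ℝ] H₁)) :=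
  stmt12_general F A B C hblock ε hε hC
end

section
/- Let P ∈ L²[0,1] satisfy P = Σ_{k=1}^N (d_k G_k P + β_k χ_{(α_k,α_{k+1})}) with Σ a_k d_k ≠ 1 and Σ a_k² d_k ≠ 1, and let P₀ = ∫₀¹ P dμ. Then the first moment P₁ = ∫₀¹ P(x)·x dμ satisfies P₁ = [Σ_{k=1}^N a_k (a_k β_k / 2 + α_k d_k P₀ + α_k β_k)] / (1 − Σ_{k=1}^N a_k² d_k). -/
open MeasureTheory

/-!
Integrate `x ↦ x` against both sides of the fixed-point equation. The intervals
`(α_k, α_{k+1})` partition `(0, 1)`, and on the `k`-th one the substitution `x = α_k + a_k t`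
turns the contribution of `d_k P((x - α_k)/a_k) + β_k` into
`a_k α_k d_k P₀ + a_k² d_k P₁ + a_k α_k β_k + a_k² β_k / 2`. Hence `P₁ = A + (Σ a_k² d_k) P₁`,
which is solved for `P₁` because `Σ a_k² d_k ≠ 1`.
-/

/-- The similarity operator `G_S` associated with the data `S = (N, a, d, β)`. -/
noncomputable def simOp (N : ℕ) (a d β : ℕ → ℝ) (f : ℝ → ℝ) : ℝ → ℝ :=
  fun x => ∑ k ∈ Finset.range N,
    Set.indicator (Set.Ioo (∑ j ∈ Finset.range k, a j) (∑ j ∈ Finset.range (k + 1), a j))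
      (fun t => d k * f ((t - ∑ j ∈ Finset.range k, a j) / a k) + β k) x

open Set Finset

section AffineRescaling

variable {α c : ℝ}

theorem intervalIntegral_comp_div_sub_mul_id (g : ℝ → ℝ) (hc : c ≠ 0) :
    ∫ x in α..α + c, g ((x - α) / c) * x = c * ∫ t in (0 : ℝ)..1, g t * (α + c * t) := by
  have h := intervalIntegral.integral_comp_mul_add (a := 0) (b := 1)
    (fun x => g ((x - α) / c) * x) hc α
  simp only [mul_zero, mul_one, zero_add, add_sub_cancel_right, mul_div_cancel_left₀ _ hc,
    smul_eq_mul] at h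
  rw [add_comm α c, ← mul_inv_cancel_left₀ hc (∫ x in α..c + α, _), ← h]
  exact congrArg _ (intervalIntegral.integral_congr fun t _ => by ring_nf)

theorem IntervalIntegrable.comp_div_sub {g : ℝ → ℝ} (hg : IntervalIntegrable g volume 0 1) :
    IntervalIntegrable (fun x => g ((x - α) / c)) volume α (α + c) := by
  have h := (hg.comp_mul_right (c := c⁻¹)).comp_sub_right α
  simp only [div_inv_eq_mul, zero_mul, one_mul, zero_add] at h
  simpa only [div_eq_mul_inv, add_comm c α] using h

theorem intervalIntegral_affine_piece_mul_id {f : ℝ → ℝ} (hf : IntervalIntegrable f volume 0 1)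
    (hfx : IntervalIntegrable (fun t => f t * t) volume 0 1) (hc : c ≠ 0) (d b : ℝ) :
    ∫ x in α..α + c, (d * f ((x - α) / c) + b) * x
      = c * (c * b / 2 + α * d * (∫ t in (0 : ℝ)..1, f t) + α * b)
        + c ^ 2 * d * ∫ t in (0 : ℝ)..1, f t * t := by
  have hlinear : ∫ t in (0 : ℝ)..1, (α * b + c * b * t) = α * b + c * b / 2 := by
    rw [intervalIntegral.integral_add intervalIntegrable_const
        (intervalIntegral.intervalIntegrable_id.const_mul _), intervalIntegral.integral_const,
      intervalIntegral.integral_const_mul, integral_id]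
    norm_num
    ring
  have hsplit : ∫ t in (0 : ℝ)..1, (d * f t + b) * (α + c * t)
      = α * d * (∫ t in (0 : ℝ)..1, f t) + c * d * (∫ t in (0 : ℝ)..1, f t * t)
        + (α * b + c * b / 2) := by
    rw [← hlinear, ← intervalIntegral.integral_const_mul, ← intervalIntegral.integral_const_mul,
      ← intervalIntegral.integral_add (hf.const_mul _) (hfx.const_mul _),
      ← intervalIntegral.integral_add ((hf.const_mul _).add (hfx.const_mul _))
        (intervalIntegrable_const.add (intervalIntegral.intervalIntegrable_id.const_mul _))]
    exact intervalIntegral.integral_congr fun t _ => by ring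
  rw [intervalIntegral_comp_div_sub_mul_id (fun t => d * f t + b) hc, hsplit]
  ring

end AffineRescaling

theorem setIntegral_Ioo_sum_indicator_Ioo {N : ℕ} {α : ℕ → ℝ} (hα : MonotoneOn α (Set.Iic N))
    (F : ℕ → ℝ → ℝ) (hF : ∀ k < N, IntervalIntegrable (F k) volume (α k) (α (k + 1))) :
    ∫ x in Ioo (α 0) (α N), ∑ k ∈ range N, (Ioo (α k) (α (k + 1))).indicator (F k) x
      = ∑ k ∈ range N, ∫ x in α k..α (k + 1), F k x := by
  have hle : ∀ k < N, α k ≤ α (k + 1) := fun k hk =>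
    hα (mem_Iic.2 hk.le) (mem_Iic.2 hk) k.le_succ
  have hsub : ∀ k < N, Ioo (α k) (α (k + 1)) ⊆ Ioo (α 0) (α N) := fun k hk =>
    Ioo_subset_Ioo (hα (mem_Iic.2 (Nat.zero_le N)) (mem_Iic.2 hk.le) k.zero_le)
      (hα (mem_Iic.2 hk) (mem_Iic.2 le_rfl) hk)
  have hFon : ∀ k < N, IntegrableOn (F k) (Ioo (α k) (α (k + 1))) := fun k hk =>
    ((intervalIntegrable_iff_integrableOn_Ioc_of_le (hle k hk)).1 (hF k hk)).mono_set
      Ioo_subset_Ioc_self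
  rw [integral_finsetSum _ fun k hk =>
    ((hFon k (mem_range.1 hk)).integrable_indicator measurableSet_Ioo).restrict]
  refine Finset.sum_congr rfl fun k hk => ?_
  rw [setIntegral_indicator measurableSet_Ioo, inter_eq_self_of_subset_right
    (hsub k (mem_range.1 hk)), intervalIntegral.integral_of_le (hle k (mem_range.1 hk)),
    integral_Ioc_eq_integral_Ioo]

theorem monotoneOn_sum_range {N : ℕ} {a : ℕ → ℝ} (ha : ∀ k < N, 0 ≤ a k) :
    MonotoneOn (fun k => ∑ j ∈ range k, a j) (Set.Iic N) := fun _ _ _ hk hjk =>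
  sum_le_sum_of_subset_of_nonneg (range_subset_range.2 hjk) fun i hi _ =>
    ha i ((mem_range.1 hi).trans_le hk)

theorem setIntegral_simOp_mul_id {N : ℕ} {a : ℕ → ℝ} (ha : ∀ k < N, 0 < a k)
    (hsum : ∑ k ∈ range N, a k = 1) (d β : ℕ → ℝ) {f : ℝ → ℝ} (hf : IntegrableOn f (Ioo 0 1))
    (hfx : IntegrableOn (fun x => f x * x) (Ioo 0 1)) :
    ∫ x in Ioo (0 : ℝ) 1, simOp N a d β f x * x
      = ∑ k ∈ range N, a k * (a k * β k / 2
          + (∑ j ∈ range k, a j) * d k * (∫ x in Ioo (0 : ℝ) 1, f x)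
          + (∑ j ∈ range k, a j) * β k)
        + (∑ k ∈ range N, a k ^ 2 * d k) * ∫ x in Ioo (0 : ℝ) 1, f x * x := by
  have hinterval : ∀ g : ℝ → ℝ, IntegrableOn g (Ioo 0 1) →
      IntervalIntegrable g volume 0 1 ∧ ∫ x in (0 : ℝ)..1, g x = ∫ x in Ioo (0 : ℝ) 1, g x :=
    fun g hg => ⟨(intervalIntegrable_iff_integrableOn_Ioo_of_le zero_le_one).2 hg,
      by rw [intervalIntegral.integral_of_le zero_le_one, integral_Ioc_eq_integral_Ioo]⟩
  obtain ⟨hf', hf_eq⟩ := hinterval f hf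
  obtain ⟨hfx', hfx_eq⟩ := hinterval _ hfx
  have hpieces := setIntegral_Ioo_sum_indicator_Ioo
    (monotoneOn_sum_range fun k hk => (ha k hk).le)
    (fun k x => (d k * f ((x - ∑ j ∈ range k, a j) / a k) + β k) * x) fun k hk => by
      rw [sum_range_succ]
      exact ((hf'.comp_div_sub.const_mul _).add intervalIntegrable_const).mul_continuousOn
        continuousOn_id
  rw [sum_range_zero, hsum] at hpieces
  simp only [indicator_mul_left] at hpieces
  conv_lhs => simp only [simOp, Finset.sum_mul]
  rw [hpieces, ← hf_eq, ← hfx_eq, Finset.sum_mul (range N) fun k => a k ^ 2 * d k,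
    ← Finset.sum_add_distrib]
  refine Finset.sum_congr rfl fun k hk => ?_
  rw [sum_range_succ, intervalIntegral_affine_piece_mul_id hf' hfx' (ha k (mem_range.1 hk)).ne']

theorem stmt16_general (N : ℕ) (a d β : ℕ → ℝ)
    (ha : ∀ k < N, 0 < a k) (hsum : ∑ k ∈ Finset.range N, a k = 1)
    (P : ℝ → ℝ)
    (hPint : IntegrableOn P (Set.Ioo 0 1))
    (hPxint : IntegrableOn (fun x => P x * x) (Set.Ioo 0 1))
    (hfix : P =ᵐ[volume.restrict (Set.Ioo (0:ℝ) 1)] simOp N a d β P)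
    (hd2 : ∑ k ∈ Finset.range N, a k ^ 2 * d k ≠ 1) :
    ∫ x in Set.Ioo (0:ℝ) 1, P x * x
      = (∑ k ∈ Finset.range N, a k *
          (a k * β k / 2
            + (∑ j ∈ Finset.range k, a j) * d k * (∫ x in Set.Ioo (0:ℝ) 1, P x)
            + (∑ j ∈ Finset.range k, a j) * β k))
        / (1 - ∑ k ∈ Finset.range N, a k ^ 2 * d k) := by
  have hmoment := setIntegral_simOp_mul_id ha hsum d β hPint hPxint
  have hfixed :
      ∫ x in Set.Ioo (0:ℝ) 1, P x * x = ∫ x in Set.Ioo (0:ℝ) 1, simOp N a d β P x * x :=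
    integral_congr_ae (hfix.mul (ae_eq_refl _))
  rw [eq_div_iff (sub_ne_zero.2 hd2.symm)]
  linear_combination hfixed + hmoment

/-- The first moment of a self-similar `P`:
`P₁ = [Σ a_k (a_k β_k/2 + α_k d_k P₀ + α_k β_k)] / (1 − Σ a_k² d_k)`,
where `α_k = a_0 + ⋯ + a_{k-1}` and `P₀ = ∫ P`. -/
theorem stmt16 (N : ℕ) (hN : 1 < N) (a d β : ℕ → ℝ)
    (ha : ∀ k < N, 0 < a k) (hsum : ∑ k ∈ Finset.range N, a k = 1)
    (P : ℝ → ℝ) (hP : Measurable P)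
    (hPint : IntegrableOn P (Set.Ioo 0 1))
    (hPxint : IntegrableOn (fun x => P x * x) (Set.Ioo 0 1))
    (hPsq : IntegrableOn (fun x => P x ^ 2) (Set.Ioo 0 1))
    (hfix : P =ᵐ[volume.restrict (Set.Ioo (0:ℝ) 1)] simOp N a d β P)
    (hd1 : ∑ k ∈ Finset.range N, a k * d k ≠ 1)
    (hd2 : ∑ k ∈ Finset.range N, a k ^ 2 * d k ≠ 1) :
    ∫ x in Set.Ioo (0:ℝ) 1, P x * x
      = (∑ k ∈ Finset.range N, a k *
          (a k * β k / 2
            + (∑ j ∈ Finset.range k, a j) * d k * (∫ x in Set.Ioo (0:ℝ) 1, P x)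
            + (∑ j ∈ Finset.range k, a j) * β k))
        / (1 - ∑ k ∈ Finset.range N, a k ^ 2 * d k) :=
  stmt16_general N a d β ha hsum P hPint hPxint hfix hd2
end
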